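/- arXiv:math/0701774 — 2 statements merged into one kernel-verified Lean document; each statement's English description precedes it below -/
import Mathlib

section
/- Let f : [-1, ∞) → ℝ be defined by f(v) = v|v|^p - v + (p/2)(1 - v²) for a real number p > 1. Then f is nonnegative on [-1, ∞), f(-1) = f(1) = 0, and f(v) > 0 for all v in (-1,1) ∪ (1, ∞). -/
private lemma hasDerivAt_aux (p : ℝ) (x : ℝ) (hx : 0 < x) :
    HasDerivAt (fun v : ℝ => v * v ^ p - v + (p / 2) * (1 - v ^ 2))
      ((p + 1) * x ^ p - 1 - p * x) x := by
  have h1 : HasDerivAt (fun v : ℝ => v ^ p) (p * x ^ (p - 1)) x :=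
    Real.hasDerivAt_rpow_const (Or.inl hx.ne')
  have h2 : HasDerivAt (fun v : ℝ => v * v ^ p)
      (1 * x ^ p + x * (p * x ^ (p - 1))) x := (hasDerivAt_id x).mul h1
  have h3 : HasDerivAt (fun v : ℝ => (p / 2) * (1 - v ^ 2))
      ((p / 2) * (0 - 2 * x ^ 1)) x := by
    exact (((hasDerivAt_const x (1:ℝ)).sub (hasDerivAt_pow 2 x)).const_mul (p / 2)).congr_deriv
      (by push_cast; ring)
  have h := (h2.sub (hasDerivAt_id x)).add h3
  convert h using 1
  · rfl
  · rfl
  · rfl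
  have hxp : x * (p * x ^ (p - 1)) = p * x ^ p := by
    rw [show x * (p * x ^ (p - 1)) = p * (x ^ (p - 1) * x) by ring,
      ← Real.rpow_add_one hx.ne', sub_add_cancel]
  rw [hxp]; ring

theorem stmt_0 (p : ℝ) (hp : 1 < p)
    (f : ℝ → ℝ) (hf : ∀ v, f v = v * |v| ^ p - v + (p / 2) * (1 - v ^ 2)) :
    (∀ v, -1 ≤ v → 0 ≤ f v) ∧ f (-1) = 0 ∧ f 1 = 0 ∧
      (∀ v, ((-1 < v ∧ v < 1) ∨ 1 < v) → 0 < f v) := by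
  have hfeq : f = fun v => v * |v| ^ p - v + (p / 2) * (1 - v ^ 2) := funext hf
  have hf1 : f 1 = 0 := by rw [hf]; simp
  have hfneg1 : f (-1) = 0 := by rw [hf]; simp
  -- continuity
  have hcont : Continuous f := by
    rw [hfeq]
    have h1 : Continuous fun v : ℝ => |v| ^ p :=
      continuous_abs.rpow_const (fun x => Or.inr (by linarith))
    continuity
  -- local agreement with the rpow expression on positives
  have hloc : ∀ x : ℝ, 0 < x →
      f =ᶠ[nhds x] fun v => v * v ^ p - v + (p / 2) * (1 - v ^ 2) := by
    intro x hx
    filter_upwards [eventually_gt_nhds hx] with v hv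
    rw [hf, abs_of_pos hv]
  have hderiv : ∀ x : ℝ, 0 < x → deriv f x = (p + 1) * x ^ p - 1 - p * x := by
    intro x hx
    rw [Filter.EventuallyEq.deriv_eq (hloc x hx)]
    exact (hasDerivAt_aux p x hx).deriv
  -- strictly decreasing on [0,1]
  have hanti : StrictAntiOn f (Set.Icc 0 1) := by
    apply strictAntiOn_of_deriv_neg (convex_Icc 0 1) hcont.continuousOn
    intro x hx
    rw [interior_Icc] at hx
    rw [hderiv x hx.1]
    have hxp : x ^ p < x := by
      calc x ^ p < x ^ (1:ℝ) := Real.rpow_lt_rpow_of_exponent_gt hx.1 hx.2 hp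
      _ = x := Real.rpow_one x
    nlinarith [hx.1, hx.2]
  -- strictly increasing on [1,∞)
  have hmono : StrictMonoOn f (Set.Ici 1) := by
    apply strictMonoOn_of_deriv_pos (convex_Ici 1) hcont.continuousOn
    intro x hx
    rw [interior_Ici] at hx
    rw [hderiv x (by linarith [hx.out] : (0:ℝ) < x)]
    have hx1 : (1:ℝ) < x := hx
    have hxp : x < x ^ p := by
      calc x = x ^ (1:ℝ) := (Real.rpow_one x).symm
      _ < x ^ p := Real.rpow_lt_rpow_of_exponent_lt hx1 hp
    nlinarith
  -- positivity on (-1, 0]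
  have hnegpos : ∀ v : ℝ, -1 < v → v ≤ 0 → 0 < f v := by
    intro v hv1 hv0
    rw [hf, abs_of_nonpos hv0]
    obtain ⟨u, hu, hu0, hu1⟩ : ∃ u, u = -v ∧ 0 ≤ u ∧ u < 1 :=
      ⟨-v, rfl, by linarith, by linarith⟩
    have hkey : u * u ^ p ≤ u * u := by
      rcases eq_or_lt_of_le hu0 with h | h
      · simp [← h]
      · have : u ^ p ≤ u ^ (1:ℝ) :=
          Real.rpow_le_rpow_of_exponent_ge h hu1.le hp.le
        rw [Real.rpow_one] at this
        exact mul_le_mul_of_nonneg_left this hu0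
    have hexp : v * (-v) ^ p - v + p / 2 * (1 - v ^ 2)
        = -(u * u ^ p) + u + p / 2 * (1 - u ^ 2) := by
      rw [hu]; ring_nf
    rw [hexp]
    have ha : 0 ≤ u * (1 - u) := mul_nonneg hu0 (by linarith)
    have hsq : 0 < 1 - u ^ 2 := by nlinarith
    have hb : 0 < p / 2 * (1 - u ^ 2) := by positivity
    nlinarith [hkey, ha, hb]
  -- assemble strict positivity
  have hpos : ∀ v : ℝ, ((-1 < v ∧ v < 1) ∨ 1 < v) → 0 < f v := by
    intro v hv
    rcases hv with ⟨h1, h2⟩ | h1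
    · rcases le_or_gt v 0 with h0 | h0
      · exact hnegpos v h1 h0
      · have := hanti (Set.mem_Icc.mpr ⟨h0.le, h2.le⟩)
          (Set.mem_Icc.mpr ⟨by norm_num, le_refl 1⟩) h2
        rwa [hf1] at this
    · have := hmono (Set.mem_Ici.mpr (le_refl 1)) (Set.mem_Ici.mpr h1.le) h1
      rwa [hf1] at this
  refine ⟨?_, hfneg1, hf1, hpos⟩
  intro v hv
  rcases eq_or_lt_of_le hv with h | h
  · rw [← h, hfneg1]
  rcases lt_trichotomy v 1 with h1 | h1 | h1
  · exact (hpos v (Or.inl ⟨h, h1⟩)).le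
  · rw [h1, hf1]
  · exact (hpos v (Or.inr h1)).le
end

section
/- Let Ω ⊆ ℝ^N be a measurable set with |Ω| = 1, p > 1, and let v ∈ L^{p+1}(Ω) satisfy ∫_Ω v = 0, ∫_Ω v² = 1, and v ≥ -1 almost everywhere on Ω. Then ∫_Ω v|v|^p = ∫_Ω f(v) where f(v) = v|v|^p - v + (p/2)(1 - v²), and in particular ∫_Ω v|v|^p ≥ 0. -/
open MeasureTheory

lemma key_pointwise {p : ℝ} (hp : 1 < p) {t : ℝ} (ht : -1 ≤ t) :
    0 ≤ t * |t| ^ p - t + p / 2 * (1 - t ^ 2) := by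
  rcases le_or_gt 0 t with h | h
  · rw [abs_of_nonneg h]
    have hb : 1 + p * (t - 1) ≤ (1 + (t - 1)) ^ p :=
      one_add_mul_self_le_rpow_one_add (by linarith) hp.le
    rw [show 1 + (t - 1) = t by ring] at hb
    nlinarith [mul_le_mul_of_nonneg_left hb h, sq_nonneg (t - 1)]
  · rw [abs_of_neg h]
    have h1 : (-t) ^ p ≤ 1 :=
      Real.rpow_le_one (by linarith) (by linarith) (by linarith)
    have h3 : t * 1 ≤ t * (-t) ^ p := mul_le_mul_of_nonpos_left h1 h.le
    have h4 : (0:ℝ) ≤ (1 - t) * (1 + t) :=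
      mul_nonneg (by linarith) (by linarith)
    nlinarith

theorem stmt_1 (N : ℕ) (Ω : Set (EuclideanSpace ℝ (Fin N))) (hΩ : MeasurableSet Ω)
    (hvol : volume Ω = 1) (p : ℝ) (hp : 1 < p)
    (v : EuclideanSpace ℝ (Fin N) → ℝ)
    (hmem : MemLp v (ENNReal.ofReal (p + 1)) (volume.restrict Ω))
    (hmean : ∫ x in Ω, v x = 0)
    (hL2 : ∫ x in Ω, (v x) ^ 2 = 1)
    (hlow : ∀ᵐ x ∂(volume.restrict Ω), -1 ≤ v x) :
    (∫ x in Ω, v x * |v x| ^ p)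
      = ∫ x in Ω, (v x * |v x| ^ p - v x + (p / 2) * (1 - (v x) ^ 2)) ∧
    0 ≤ ∫ x in Ω, v x * |v x| ^ p := by
  set μ := volume.restrict Ω with hμ
  have hfin : IsFiniteMeasure μ := by
    constructor
    rw [hμ, Measure.restrict_apply_univ, hvol]
    exact ENNReal.one_lt_top
  have hp1 : (0:ℝ) ≤ p + 1 := by linarith
  -- integrability of v
  have hv_int : Integrable v μ := by
    refine hmem.integrable ?_
    rw [ENNReal.one_le_ofReal]; linarith
  -- integrability of v^2
  have hv2_int : Integrable (fun x => v x ^ 2) μ := by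
    refine (hmem.mono_exponent ?_).integrable_sq
    rw [show (2 : ENNReal) = ENNReal.ofReal 2 by simp]
    exact ENNReal.ofReal_le_ofReal (by linarith)
  -- integrability of v * |v|^p
  have hvm : AEMeasurable v μ := hmem.aestronglyMeasurable.aemeasurable
  have habs : AEMeasurable (fun x => |v x| ^ p) μ :=
    ((Real.continuous_rpow_const (by linarith : (0:ℝ) ≤ p)).measurable.comp
      measurable_abs).comp_aemeasurable hvm
  have hmeas : AEStronglyMeasurable (fun x => v x * |v x| ^ p) μ :=
    (hvm.mul habs).aestronglyMeasurable
  have hnorm_int : Integrable (fun x => ‖v x‖ ^ (p + 1)) μ := by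
    have h := hmem.integrable_norm_rpow (by simp; linarith) (by simp)
    rwa [ENNReal.toReal_ofReal hp1] at h
  have hf_int : Integrable (fun x => v x * |v x| ^ p) μ := by
    refine hnorm_int.mono' hmeas (Filter.Eventually.of_forall fun x => ?_)
    rw [Real.norm_eq_abs, abs_mul, abs_of_nonneg (Real.rpow_nonneg (abs_nonneg _) p),
      Real.norm_eq_abs]
    rw [show p + 1 = 1 + p by ring, Real.rpow_add' (abs_nonneg _) (by intro h; linarith),
      Real.rpow_one]
  -- the equality
  have hconst_int : Integrable (fun x => p / 2 * (1 - v x ^ 2)) μ :=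
    ((integrable_const (1:ℝ)).sub hv2_int).const_mul _
  have heq : (∫ x in Ω, v x * |v x| ^ p)
      = ∫ x in Ω, (v x * |v x| ^ p - v x + (p / 2) * (1 - (v x) ^ 2)) := by
    have hsub : Integrable (fun x => v x * |v x| ^ p - v x) μ := hf_int.sub hv_int
    rw [integral_add hsub hconst_int, integral_sub hf_int hv_int,
      hmean, integral_const_mul, integral_sub (integrable_const 1) hv2_int, hL2]
    simp [hμ, Measure.restrict_apply_univ, hvol, measureReal_def]
  refine ⟨heq, ?_⟩
  rw [heq]
  refine integral_nonneg_of_ae ?_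
  filter_upwards [hlow] with x hx
  exact key_pointwise hp hx
end
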